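/- For a closed convex cone K in H(M_A,M_B), the condition K∘CP_A ⊆ K is equivalent to each of the following: (1) for every φ ∈ H(M_A,M_B), φ ∈ K° if and only if (1_A ⊗ φ)(C_ψ) ∈ C_{K°} for every ψ ∈ CP_A; (2) for every φ ∈ H(M_A,M_B), φ ∈ K° if and only if (1_A ⊗ σ*)(C_φ) is positive semidefinite for every σ ∈ K; (3) for every φ ∈ H(M_A,M_B), φ ∈ K° if and only if (1_A ⊗ φ*)(C_σ) is positive semidefinite for every σ ∈ K. -/

import Mathlib

open Matrix Finset
open scoped ComplexOrder Kronecker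

/-- The algebra of `n × n` complex matrices. -/
abbrev Mat (n : ℕ) := Matrix (Fin n) (Fin n) ℂ

/-- Linear maps between matrix algebras. -/
abbrev MMap (m n : ℕ) := Mat m →ₗ[ℂ] Mat n

/-- The bilinear pairing `⟨a,b⟩ = Tr(aᵀ b)`. -/
noncomputable def mpair {ι : Type*} [Fintype ι] (x y : Matrix ι ι ℂ) : ℂ :=
  (xᵀ * y).trace

/-- The Choi matrix `C_φ = Σ_{i,j} e_{ij} ⊗ φ(e_{ij})`. -/
noncomputable def choi {m n : ℕ} (φ : MMap m n) :
    Matrix (Fin m × Fin n) (Fin m × Fin n) ℂ :=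
  Matrix.of fun p q => φ (Matrix.single p.1 q.1 1) p.2 q.2

/-- The pairing on maps `⟨φ,ψ⟩ = ⟨C_φ, C_ψ⟩`. -/
noncomputable def mapPair {m n : ℕ} (φ ψ : MMap m n) : ℂ := mpair (choi φ) (choi ψ)

/-- The adjoint `φ*` with respect to the pairing `⟨a,b⟩ = Tr(aᵀ b)`:
it satisfies `⟨φ(a),b⟩ = ⟨a,φ*(b)⟩`. -/
noncomputable def adjMap {m n : ℕ} (φ : MMap m n) : MMap n m where
  toFun y := Matrix.of fun i j => mpair (φ (Matrix.single i j 1)) y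
  map_add' y z := by
    ext i j
    simp [mpair, Matrix.mul_add]
  map_smul' c y := by
    ext i j
    simp [mpair, Matrix.mul_smul]

/-- Hermitian-preserving maps: `φ(a*) = φ(a)*`. -/
def IsHermP {m n : ℕ} (φ : MMap m n) : Prop := ∀ x : Mat m, φ xᴴ = (φ x)ᴴ

/-- The real vector space `H(M_A,M_B)` of Hermitian-preserving maps, as a set. -/
def HermSet (m n : ℕ) : Set (MMap m n) := {φ | IsHermP φ}

/-- Positive maps: mapping positive semidefinite matrices to positive semidefinite ones. -/
def IsPosMap {m n : ℕ} (φ : MMap m n) : Prop :=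
  ∀ x : Mat m, x.PosSemidef → (φ x).PosSemidef

/-- Completely positive maps: those whose Choi matrix is positive semidefinite. -/
def IsCP {m n : ℕ} (φ : MMap m n) : Prop := (choi φ).PosSemidef

/-- The cone `CP` of completely positive maps. -/
def CPset (m n : ℕ) : Set (MMap m n) := {φ | IsCP φ}

/-- `K₁ ∘ K₀ = {φ₁ ∘ φ₀ : φ₁ ∈ K₁, φ₀ ∈ K₀}`. -/
def compSet {m n p : ℕ} (K1 : Set (MMap n p)) (K0 : Set (MMap m n)) : Set (MMap m p) :=
  {χ | ∃ φ₁ ∈ K1, ∃ φ₀ ∈ K0, χ = φ₁ ∘ₗ φ₀}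

/-- `K₂ ∘ K₁ ∘ K₀ = {φ₂ ∘ φ₁ ∘ φ₀ : φᵢ ∈ Kᵢ}`. -/
def comp3 {m n p q : ℕ} (K2 : Set (MMap p q)) (K1 : Set (MMap n p)) (K0 : Set (MMap m n)) :
    Set (MMap m q) :=
  {χ | ∃ φ₂ ∈ K2, ∃ φ₁ ∈ K1, ∃ φ₀ ∈ K0, χ = φ₂ ∘ₗ φ₁ ∘ₗ φ₀}

/-- The dual cone `K° = {ψ ∈ H(M_A,M_B) : ⟨φ,ψ⟩ ≥ 0 for all φ ∈ K}`. -/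
def dualCone {m n : ℕ} (K : Set (MMap m n)) : Set (MMap m n) :=
  {ψ | IsHermP ψ ∧ ∀ φ ∈ K, 0 ≤ mapPair φ ψ}

/-- `K* = {φ* : φ ∈ K}`. -/
noncomputable def starSet {m n : ℕ} (K : Set (MMap m n)) : Set (MMap n m) := adjMap '' K

/-- `K^⊳ = (K ∘ CP_A)°`. -/
def rdualSet {m n : ℕ} (K : Set (MMap m n)) : Set (MMap m n) :=
  dualCone (compSet K (CPset m m))

/-- `K^⊲ = (CP_B ∘ K)°`. -/
def ldualSet {m n : ℕ} (K : Set (MMap m n)) : Set (MMap m n) :=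
  dualCone (compSet (CPset n n) K)

/-- A convex cone of maps: closed under addition and nonnegative real scaling. -/
def IsConeSet {m n : ℕ} (K : Set (MMap m n)) : Prop :=
  (∀ φ ∈ K, ∀ ψ ∈ K, φ + ψ ∈ K) ∧ (∀ φ ∈ K, ∀ r : ℝ, 0 ≤ r → (r : ℂ) • φ ∈ K)

/-- A closed convex cone of maps (closedness via the Choi isomorphism). -/
def IsClosedConeSet {m n : ℕ} (K : Set (MMap m n)) : Prop :=
  IsConeSet K ∧ IsClosed (choi '' K)

/-- Ampliation `1_Z ⊗ σ : M_Z ⊗ M_X → M_Z ⊗ M_Y`. -/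
def idTensor {z x y : ℕ} (σ : MMap x y)
    (M : Matrix (Fin z × Fin x) (Fin z × Fin x) ℂ) :
    Matrix (Fin z × Fin y) (Fin z × Fin y) ℂ :=
  Matrix.of fun p q => σ (Matrix.of fun k l => M (p.1, k) (q.1, l)) p.2 q.2

/-- Ampliation `σ ⊗ 1_Z : M_X ⊗ M_Z → M_Y ⊗ M_Z`. -/
def tensorId {x y z : ℕ} (σ : MMap x y)
    (M : Matrix (Fin x × Fin z) (Fin x × Fin z) ℂ) :
    Matrix (Fin y × Fin z) (Fin y × Fin z) ℂ :=
  Matrix.of fun p q => σ (Matrix.of fun i j => M (i, p.2) (j, q.2)) p.1 q.1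

/-- `S_1`: the closed convex cone generated by `x ⊗ y` with `x, y` positive semidefinite. -/
def SepCone (m n : ℕ) : Set (Matrix (Fin m × Fin n) (Fin m × Fin n) ℂ) :=
  closure {X | ∃ (r : ℕ) (x : Fin r → Mat m) (y : Fin r → Mat n),
    (∀ i, (x i).PosSemidef ∧ (y i).PosSemidef) ∧ X = ∑ i, x i ⊗ₖ y i}

/-- `SP_1`: Hermitian-preserving maps with separable Choi matrix. -/
def SP1set (m n : ℕ) : Set (MMap m n) := {φ | IsHermP φ ∧ choi φ ∈ SepCone m n}


/-- Vectors of Schmidt rank at most `k`. -/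
def SchmidtRankLE (k : ℕ) {m n : ℕ} (ξ : Fin m × Fin n → ℂ) : Prop :=
  ∃ (u : Fin k → Fin m → ℂ) (v : Fin k → Fin n → ℂ),
    ξ = fun p => ∑ i, u i p.1 * v i p.2

/-- `k`-blockpositive matrices: `⟨Y, |ξ⟩⟨ξ|⟩ ≥ 0` for every `ξ` of Schmidt rank at most `k`. -/
def BlockPos (k : ℕ) {m n : ℕ} (Y : Matrix (Fin m × Fin n) (Fin m × Fin n) ℂ) : Prop :=
  ∀ ξ : Fin m × Fin n → ℂ, SchmidtRankLE k ξ →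
    0 ≤ mpair Y (Matrix.of fun p q => ξ p * star (ξ q))

/-- `S_k`: the closed convex cone generated by `|ξ⟩⟨ξ|` for `ξ` of Schmidt rank at most `k`. -/
def SchmidtCone (k m n : ℕ) : Set (Matrix (Fin m × Fin n) (Fin m × Fin n) ℂ) :=
  closure {X | ∃ (r : ℕ) (ξ : Fin r → Fin m × Fin n → ℂ),
    (∀ i, SchmidtRankLE k (ξ i)) ∧
    X = ∑ i, Matrix.of fun p q => ξ i p * star (ξ i q)}

/-- `k`-positive maps: the ampliation `1_{M_k} ⊗ φ` is a positive map. -/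
def IsKPos (k : ℕ) {m n : ℕ} (φ : MMap m n) : Prop :=
  ∀ X : Matrix (Fin k × Fin m) (Fin k × Fin m) ℂ, X.PosSemidef → (idTensor φ X).PosSemidef

/-- The transpose map as a linear map. -/
def tmap (m : ℕ) : MMap m m where
  toFun x := xᵀ
  map_add' x y := by simp [Matrix.transpose_add]
  map_smul' c x := by simp [Matrix.transpose_smul]

/-- Completely copositive maps: `CCP = {φ ∘ t : φ ∈ CP}`. -/
def CCPset (m : ℕ) : Set (MMap m m) := {χ | ∃ φ, IsCP φ ∧ χ = φ ∘ₗ tmap m}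

/-- PPT maps: `PPT = CP ∩ CCP`. -/
def PPTset (m : ℕ) : Set (MMap m m) := CPset m m ∩ CCPset m

/-- Decomposable maps: the convex hull of `CP` and `CCP`. -/
noncomputable def DECset (m : ℕ) : Set (MMap m m) := convexHull ℝ (CPset m m ∪ CCPset m)

/-- The cone `P_1` of positive maps. -/
def P1set (m n : ℕ) : Set (MMap m n) := {φ | IsPosMap φ}

/-- A right-mapping cone: a closed convex cone of positive (Hermitian-preserving) maps `L`
with `L ∘ CP_A ⊆ L`. -/
def IsRMC {m n : ℕ} (L : Set (MMap m n)) : Prop :=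
  L ⊆ HermSet m n ∧ (∀ φ ∈ L, IsPosMap φ) ∧ IsClosedConeSet L ∧
    compSet L (CPset m m) ⊆ L

/-- A left-mapping cone: a closed convex cone of positive (Hermitian-preserving) maps `L`
with `CP_B ∘ L ⊆ L`. -/
def IsLMC {m n : ℕ} (L : Set (MMap m n)) : Prop :=
  L ⊆ HermSet m n ∧ (∀ φ ∈ L, IsPosMap φ) ∧ IsClosedConeSet L ∧
    compSet (CPset n n) L ⊆ L

section Infra

variable {m n p : ℕ}

lemma sum4_swap {M : Type*} [AddCommMonoid M] {ι₁ ι₂ κ₁ κ₂ : Type*} [Fintype ι₁] [Fintype ι₂]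
    [Fintype κ₁] [Fintype κ₂] (f : ι₁ → ι₂ → κ₁ → κ₂ → M) :
    ∑ a, ∑ b, ∑ c, ∑ d, f a b c d = ∑ c, ∑ d, ∑ a, ∑ b, f a b c d := by
  calc ∑ a, ∑ b, ∑ c, ∑ d, f a b c d
      = ∑ a, ∑ c, ∑ b, ∑ d, f a b c d :=
        Finset.sum_congr rfl fun a _ => Finset.sum_comm
    _ = ∑ c, ∑ a, ∑ b, ∑ d, f a b c d := Finset.sum_comm
    _ = ∑ c, ∑ a, ∑ d, ∑ b, f a b c d :=
        Finset.sum_congr rfl fun c _ => Finset.sum_congr rfl fun a _ => Finset.sum_comm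
    _ = ∑ c, ∑ d, ∑ a, ∑ b, f a b c d :=
        Finset.sum_congr rfl fun c _ => Finset.sum_comm

lemma mpair_eq {ι : Type*} [Fintype ι] (x y : Matrix ι ι ℂ) :
    mpair x y = ∑ p, ∑ q, x p q * y p q := by
  simp only [mpair, Matrix.trace, Matrix.diag, Matrix.mul_apply, Matrix.transpose_apply]
  rw [Finset.sum_comm]

lemma choi_apply (φ : MMap m n) (p q : Fin m × Fin n) :
    choi φ p q = φ (Matrix.single p.1 q.1 1) p.2 q.2 := rfl

lemma apply_expand (φ : MMap m n) (x : Mat m) (k l : Fin n) :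
    φ x k l = ∑ i, ∑ j, x i j * φ (Matrix.single i j 1) k l := by
  have h : ∀ i j : Fin m, φ (Matrix.single i j (x i j)) k l
      = x i j * φ (Matrix.single i j 1) k l := by
    intro i j
    have e : Matrix.single i j (x i j) = x i j • Matrix.single i j 1 := by
      rw [Matrix.smul_single, smul_eq_mul, mul_one]
    rw [e, _root_.map_smul]
    simp [smul_eq_mul]
  conv_lhs => rw [Matrix.matrix_eq_sum_single x]
  rw [map_sum]
  simp only [map_sum, Matrix.sum_apply, h]

lemma adjMap_apply (φ : MMap m n) (y : Mat n) (i j : Fin m) :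
    adjMap φ y i j = mpair (φ (Matrix.single i j 1)) y := rfl

lemma mpair_adj (φ : MMap m n) (a : Mat m) (b : Mat n) :
    mpair (φ a) b = mpair a (adjMap φ b) := by
  rw [mpair_eq, mpair_eq]
  simp only [apply_expand φ a, adjMap_apply, mpair_eq]
  simp only [Finset.sum_mul, Finset.mul_sum]
  rw [sum4_swap]
  exact Finset.sum_congr rfl fun i _ => Finset.sum_congr rfl fun j _ =>
    Finset.sum_congr rfl fun k _ => Finset.sum_congr rfl fun l _ => mul_assoc _ _ _

lemma mpair_stdBasis_right {ι : Type*} [Fintype ι] [DecidableEq ι] (x : Matrix ι ι ℂ) (k l : ι) :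
    mpair x (Matrix.single k l 1) = x k l := by
  rw [mpair_eq]
  simp [Matrix.single, ite_and, Finset.sum_ite_eq, mul_ite]

lemma choi_comp (σ : MMap n p) (ψ : MMap m n) :
    choi (σ ∘ₗ ψ) = idTensor σ (choi ψ) := rfl

lemma choi_add (φ ψ : MMap m n) : choi (φ + ψ) = choi φ + choi ψ := by
  ext p q
  simp [choi, Matrix.add_apply]

lemma choi_zero : choi (0 : MMap m n) = 0 := by
  ext p q
  simp [choi]

lemma choi_smul (c : ℂ) (φ : MMap m n) : choi (c • φ) = c • choi φ := by
  ext p q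
  simp [choi, Matrix.smul_apply]

lemma choi_injective {φ ψ : MMap m n} (h : choi φ = choi ψ) : φ = ψ := by
  apply LinearMap.ext
  intro x
  ext k l
  rw [apply_expand, apply_expand]
  refine Finset.sum_congr rfl fun i _ => Finset.sum_congr rfl fun j _ => ?_
  have := congrFun (congrFun h (i, k)) (j, l)
  rw [choi_apply, choi_apply] at this
  rw [this]

end Infra
section Infra2

variable {m n p : ℕ}

/-- The inverse of the Choi correspondence. -/
noncomputable def mkMap (M : Matrix (Fin m × Fin n) (Fin m × Fin n) ℂ) : MMap m n where
  toFun x := Matrix.of fun k l => ∑ i, ∑ j, x i j * M (i, k) (j, l)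
  map_add' x y := by
    ext k l
    simp [Matrix.add_apply, add_mul, Finset.sum_add_distrib]
  map_smul' c x := by
    ext k l
    simp [Matrix.smul_apply, smul_eq_mul, mul_assoc, Finset.mul_sum]

lemma choi_mkMap (M : Matrix (Fin m × Fin n) (Fin m × Fin n) ℂ) : choi (mkMap M) = M := by
  ext p q
  show ∑ i, ∑ j, Matrix.single p.1 q.1 (1 : ℂ) i j * M (i, p.2) (j, q.2) = M p q
  simp [Matrix.single, ite_and, Finset.sum_ite_eq, ite_mul]

lemma isHermP_iff_choi (φ : MMap m n) : IsHermP φ ↔ (choi φ).IsHermitian := by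
  constructor
  · intro hφ
    ext p q
    rw [Matrix.conjTranspose_apply]
    have h1 : (Matrix.single q.1 p.1 (1 : ℂ))ᴴ = Matrix.single p.1 q.1 (1 : ℂ) := by
      ext i j
      simp only [Matrix.conjTranspose_apply, Matrix.single, Matrix.of_apply]
      split_ifs with h h' h' <;> simp_all
    calc star (choi φ q p) = (φ (Matrix.single q.1 p.1 1))ᴴ p.2 q.2 := by
          rw [Matrix.conjTranspose_apply]; rfl
      _ = φ ((Matrix.single q.1 p.1 1)ᴴ) p.2 q.2 := by rw [hφ]
      _ = choi φ p q := by rw [h1]; rfl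
  · intro hch x
    ext k l
    have hfact : ∀ i j, star (φ (Matrix.single i j 1) l k)
        = φ (Matrix.single j i 1) k l := by
      intro i j
      have := hch.apply (j, k) (i, l)
      rw [choi_apply, choi_apply] at this
      exact this
    rw [Matrix.conjTranspose_apply, apply_expand, apply_expand φ x l k, star_sum]
    simp only [star_sum, star_mul', hfact]
    rw [Finset.sum_comm]
    simp [Matrix.conjTranspose_apply]

end Infra2
section Infra3

variable {m n p : ℕ}

lemma posSemidef_outer {ι : Type*} [Fintype ι] [DecidableEq ι] (v : ι → ℂ) :
    (Matrix.of fun p q => v p * star (v q)).PosSemidef := by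
  refine Matrix.PosSemidef.of_dotProduct_mulVec_nonneg ?_ ?_
  · ext p q
    simp only [Matrix.conjTranspose_apply, Matrix.of_apply, star_mul', star_star]
    ring
  · intro x
    have key : (star x) ⬝ᵥ ((Matrix.of fun p q => v p * star (v q)) *ᵥ x)
        = star (∑ q, star (v q) * x q) * (∑ q, star (v q) * x q) := by
      rw [star_sum, Finset.sum_mul_sum]
      simp only [dotProduct, Matrix.mulVec, Matrix.of_apply, Pi.star_apply,
        Finset.mul_sum, star_mul', star_star]
      refine Finset.sum_congr rfl fun p _ => Finset.sum_congr rfl fun q _ => ?_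
      ring
    rw [key]
    exact star_mul_self_nonneg _

lemma psd_trace_nonneg {ι : Type*} [Fintype ι] [DecidableEq ι] {M : Matrix ι ι ℂ}
    (h : M.PosSemidef) : 0 ≤ M.trace := by
  rw [Matrix.trace]
  refine Finset.sum_nonneg fun i _ => ?_
  have := h.dotProduct_mulVec_nonneg (Pi.single i 1)
  simpa [Matrix.mulVec_single, dotProduct, Pi.single_apply, Matrix.diag] using this

lemma psd_pair_nonneg {ι : Type*} [Fintype ι] [DecidableEq ι] {X Y : Matrix ι ι ℂ}
    (hX : X.PosSemidef) (hY : Y.PosSemidef) : 0 ≤ ∑ p, ∑ q, X p q * Y p q := by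
  rw [← mpair_eq]
  show 0 ≤ (Xᵀ * Y).trace
  obtain ⟨B, hB⟩ : ∃ B : Matrix ι ι ℂ, Xᵀ = Bᴴ * B := by
    open scoped MatrixOrder Matrix.Norms.L2Operator in
    obtain ⟨B, hB⟩ := CStarAlgebra.nonneg_iff_eq_star_mul_self.mp hX.transpose.nonneg
    exact ⟨B, by rw [hB, star_eq_conjTranspose]⟩
  rw [hB, Matrix.mul_assoc, Matrix.trace_mul_comm]
  exact psd_trace_nonneg (hY.mul_mul_conjTranspose_same B)

lemma adj_adj (φ : MMap m n) : adjMap (adjMap φ) = φ := by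
  apply LinearMap.ext
  intro x
  ext k l
  rw [adjMap_apply, mpair_eq]
  simp only [adjMap_apply, mpair_stdBasis_right]
  conv_rhs => rw [apply_expand φ x k l]
  exact Finset.sum_congr rfl fun i _ => Finset.sum_congr rfl fun j _ => mul_comm _ _

lemma adj_comp (φ : MMap n p) (ψ : MMap m n) :
    adjMap (φ ∘ₗ ψ) = adjMap ψ ∘ₗ adjMap φ := by
  apply LinearMap.ext
  intro y
  ext i j
  rw [LinearMap.comp_apply, adjMap_apply, adjMap_apply, LinearMap.comp_apply, mpair_adj]

lemma choi_adj (φ : MMap m n) :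
    choi (adjMap φ) = (choi φ).submatrix Prod.swap Prod.swap := by
  ext p q
  rw [Matrix.submatrix_apply, choi_apply, choi_apply, adjMap_apply, mpair_stdBasis_right]
  rfl

lemma cp_adj {φ : MMap m n} (h : IsCP φ) : IsCP (adjMap φ) := by
  rw [IsCP, choi_adj]
  exact h.submatrix _

lemma herm_adj {φ : MMap m n} (h : IsHermP φ) : IsHermP (adjMap φ) := by
  rw [isHermP_iff_choi] at h ⊢
  rw [choi_adj]
  exact h.submatrix _

lemma herm_comp {φ : MMap n p} {ψ : MMap m n} (hφ : IsHermP φ) (hψ : IsHermP ψ) :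
    IsHermP (φ ∘ₗ ψ) := by
  intro x
  rw [LinearMap.comp_apply, LinearMap.comp_apply, hψ, hφ]

lemma cp_herm {φ : MMap m n} (h : IsCP φ) : IsHermP φ := (isHermP_iff_choi φ).2 h.1

end Infra3
section Infra4

variable {m n p : ℕ}

lemma mapPair_eq (φ ψ : MMap m n) :
    mapPair φ ψ = ∑ p, ∑ q, choi φ p q * choi ψ p q := by
  rw [mapPair, mpair_eq]

lemma mapPair_comm (φ ψ : MMap m n) : mapPair φ ψ = mapPair ψ φ := by
  simp only [mapPair_eq]
  exact Finset.sum_congr rfl fun p _ => Finset.sum_congr rfl fun q _ => mul_comm _ _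

lemma mapPair_eq' (φ ψ : MMap m n) :
    mapPair φ ψ = ∑ i, ∑ j,
      mpair (φ (Matrix.single i j 1)) (ψ (Matrix.single i j 1)) := by
  calc mapPair φ ψ
      = ∑ p : Fin m × Fin n, ∑ q : Fin m × Fin n, choi φ p q * choi ψ p q := mapPair_eq _ _
    _ = ∑ i, ∑ k, ∑ j, ∑ l, choi φ (i, k) (j, l) * choi ψ (i, k) (j, l) := by
        rw [Fintype.sum_prod_type]
        exact Finset.sum_congr rfl fun i _ => Finset.sum_congr rfl fun k _ => by
          rw [Fintype.sum_prod_type]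
    _ = ∑ i, ∑ j, ∑ k, ∑ l, choi φ (i, k) (j, l) * choi ψ (i, k) (j, l) :=
        Finset.sum_congr rfl fun i _ => Finset.sum_comm
    _ = ∑ i, ∑ j, mpair (φ (Matrix.single i j 1)) (ψ (Matrix.single i j 1)) :=
        Finset.sum_congr rfl fun i _ => Finset.sum_congr rfl fun j _ => (mpair_eq _ _).symm

lemma mapPair_comp (σ : MMap n p) (ψ : MMap m n) (φ : MMap m p) :
    mapPair (σ ∘ₗ ψ) φ = mapPair ψ (adjMap σ ∘ₗ φ) := by
  rw [mapPair_eq', mapPair_eq']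
  exact Finset.sum_congr rfl fun i _ => Finset.sum_congr rfl fun j _ => by
    rw [LinearMap.comp_apply, LinearMap.comp_apply, mpair_adj]

lemma mapPair_adj (φ ψ : MMap m n) : mapPair (adjMap φ) (adjMap ψ) = mapPair φ ψ := by
  rw [mapPair_eq, mapPair_eq, choi_adj, choi_adj]
  refine Fintype.sum_equiv (Equiv.prodComm (Fin n) (Fin m)) _ _ fun x => ?_
  refine Fintype.sum_equiv (Equiv.prodComm (Fin n) (Fin m)) _ _ fun y => ?_
  rfl

lemma mapPair_comp' (σ : MMap n p) (ψ : MMap m n) (φ : MMap m p) :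
    mapPair (σ ∘ₗ ψ) φ = mapPair σ (φ ∘ₗ adjMap ψ) := by
  rw [← mapPair_adj (σ ∘ₗ ψ) φ, adj_comp, mapPair_comp, adj_adj,
    ← mapPair_adj σ (φ ∘ₗ adjMap ψ), adj_comp, adj_adj]

lemma cp_id : IsCP (LinearMap.id : MMap m m) := by
  rw [IsCP]
  have : choi (LinearMap.id : MMap m m)
      = Matrix.of fun p q : Fin m × Fin m =>
          (if p.1 = p.2 then (1 : ℂ) else 0) * star (if q.1 = q.2 then (1 : ℂ) else 0) := by
    ext p q
    rw [choi_apply]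
    simp only [LinearMap.id_coe, id_eq, Matrix.single, Matrix.of_apply]
    by_cases h1 : p.1 = p.2 <;> by_cases h2 : q.1 = q.2 <;> simp [h1, h2]
  rw [this]
  exact posSemidef_outer _

lemma cp_pair_nonneg {φ ψ : MMap m n} (hφ : IsCP φ) (hψ : IsCP ψ) : 0 ≤ mapPair φ ψ := by
  rw [mapPair_eq]
  exact psd_pair_nonneg hφ hψ

lemma cp_of_pairs {χ : MMap m n} (hχ : IsHermP χ)
    (h : ∀ ψ : MMap m n, IsCP ψ → 0 ≤ mapPair ψ χ) : IsCP χ := by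
  refine Matrix.PosSemidef.of_dotProduct_mulVec_nonneg ((isHermP_iff_choi χ).1 hχ) ?_
  intro v
  set u : (Fin m × Fin n) → ℂ := fun p => star (v p) with hu
  have hψ : IsCP (mkMap (Matrix.of fun p q => u p * star (u q))) := by
    rw [IsCP, choi_mkMap]
    exact posSemidef_outer u
  have hp := h _ hψ
  rw [mapPair_eq, choi_mkMap] at hp
  have he : (star v) ⬝ᵥ (choi χ *ᵥ v)
      = ∑ p, ∑ q, (Matrix.of fun p q => u p * star (u q)) p q * choi χ p q := by
    simp only [dotProduct, Matrix.mulVec, Matrix.of_apply, Pi.star_apply,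
      Finset.mul_sum, hu, star_star]
    refine Finset.sum_congr rfl fun p _ => Finset.sum_congr rfl fun q _ => ?_
    ring
  rw [he]
  exact hp

end Infra4
section Bipolar

variable {a b : ℕ}

instance locConvMat (ι : Type*) : LocallyConvexSpace ℝ (Matrix ι ι ℂ) :=
  (inferInstance : LocallyConvexSpace ℝ (ι → ι → ℂ))

lemma real_smul_mat {ι κ : Type*} (r : ℝ) (X : Matrix ι κ ℂ) : (r : ℂ) • X = r • X := by
  ext p q
  simp [Matrix.smul_apply, Complex.real_smul, smul_eq_mul]

lemma bipolar {K : Set (MMap a b)} (hH : K ⊆ HermSet a b)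
    (hK : IsClosedConeSet K) (hne : K.Nonempty) {χ : MMap a b} (hχ : IsHermP χ)
    (h : ∀ φ ∈ dualCone K, 0 ≤ mapPair χ φ) : χ ∈ K := by
  classical
  by_contra hc
  set S : Set (Matrix (Fin a × Fin b) (Fin a × Fin b) ℂ) := choi '' K with hS
  have hzero : (0 : Matrix (Fin a × Fin b) (Fin a × Fin b) ℂ) ∈ S := by
    obtain ⟨σ₀, hσ₀⟩ := hne
    have h0 : ((0 : ℝ) : ℂ) • σ₀ ∈ K := hK.1.2 σ₀ hσ₀ 0 le_rfl
    refine ⟨((0 : ℝ) : ℂ) • σ₀, h0, ?_⟩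
    rw [choi_smul]
    simp
  have hsmulmem : ∀ s ∈ S, ∀ r : ℝ, 0 ≤ r → r • s ∈ S := by
    rintro s ⟨σ', hσ', rfl⟩ r hr
    exact ⟨(r : ℂ) • σ', hK.1.2 σ' hσ' r hr, by rw [choi_smul, real_smul_mat]⟩
  have haddmem : ∀ s ∈ S, ∀ t ∈ S, s + t ∈ S := by
    rintro s ⟨σ', hσ', rfl⟩ t ⟨τ', hτ', rfl⟩
    exact ⟨σ' + τ', hK.1.1 σ' hσ' τ' hτ', by rw [choi_add]⟩
  have hconv : Convex ℝ S := by
    intro x hx y hy α β hα hβ hab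
    exact haddmem _ (hsmulmem x hx α hα) _ (hsmulmem y hy β hβ)
  have hcl : IsClosed S := hK.2
  have hnotin : choi χ ∉ S := by
    rintro ⟨τ, hτ, heq⟩
    exact hc (choi_injective heq ▸ hτ)
  obtain ⟨f, u, hfS, hfx⟩ := geometric_hahn_banach_closed_point hconv hcl hnotin
  have hu : 0 < u := by simpa using hfS 0 hzero
  have hfneg : ∀ s ∈ S, f s ≤ 0 := by
    intro s hs
    by_contra hpos
    push_neg at hpos
    have hr : 0 ≤ u / f s := le_of_lt (div_pos hu hpos)
    have := hfS _ (hsmulmem s hs _ hr)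
    rw [f.map_smul, smul_eq_mul, div_mul_cancel₀ u (ne_of_gt hpos)] at this
    exact lt_irrefl u this
  -- representation of f by a matrix W
  set E : (Fin a × Fin b) → (Fin a × Fin b) → Matrix (Fin a × Fin b) (Fin a × Fin b) ℂ :=
    fun p q => Matrix.single p q 1 with hE
  set W : Matrix (Fin a × Fin b) (Fin a × Fin b) ℂ :=
    Matrix.of fun p q => (f (E p q) : ℂ) - (f (Complex.I • E p q) : ℂ) * Complex.I with hW
  have hzsmul : ∀ (p q : Fin a × Fin b) (z : ℂ),
      Matrix.single p q z = z.re • E p q + z.im • (Complex.I • E p q) := by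
    intro p q z
    ext i j
    simp only [hE, Matrix.add_apply, Matrix.smul_apply, Matrix.single, Matrix.of_apply,
      smul_eq_mul, Complex.real_smul]
    split_ifs with hij
    · simp only [mul_one]
      exact (Complex.re_add_im z).symm
    · simp
  have hterm : ∀ (p q : Fin a × Fin b) (z : ℂ),
      f (Matrix.single p q z) = (z * W p q).re := by
    intro p q z
    rw [hzsmul p q z, map_add, f.map_smul, f.map_smul]
    have : W p q = Complex.mk (f (E p q)) (-(f (Complex.I • E p q))) := by
      rw [hW]
      simp only [Matrix.of_apply]
      apply Complex.ext <;> simp [Complex.ext_iff]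
    rw [this]
    simp [Complex.mul_re, smul_eq_mul]
  have hrepr : ∀ Y : Matrix (Fin a × Fin b) (Fin a × Fin b) ℂ,
      f Y = (∑ p, ∑ q, Y p q * W p q).re := by
    intro Y
    conv_lhs => rw [Matrix.matrix_eq_sum_single Y]
    rw [map_sum, Complex.re_sum]
    refine Finset.sum_congr rfl fun p _ => ?_
    rw [map_sum, Complex.re_sum]
    exact Finset.sum_congr rfl fun q _ => hterm p q (Y p q)
  -- Hermitian part of -W
  set Wh : Matrix (Fin a × Fin b) (Fin a × Fin b) ℂ :=
    Matrix.of fun p q => -(2⁻¹ : ℂ) * (W p q + star (W q p)) with hWh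
  have hWh_herm : Wh.IsHermitian := by
    ext p q
    simp only [Matrix.conjTranspose_apply, hWh, Matrix.of_apply, star_mul', star_add, star_star,
      star_neg, star_inv₀]
    rw [show star (2 : ℂ) = 2 by simp]
    ring
  have hkey : ∀ X : Matrix (Fin a × Fin b) (Fin a × Fin b) ℂ, X.IsHermitian →
      ∑ p, ∑ q, X p q * Wh p q = -(f X : ℂ) := by
    intro X hX
    have h1 : ∑ p, ∑ q, X p q * star (W q p) = star (∑ p, ∑ q, X p q * W p q) := by
      rw [star_sum, Finset.sum_comm]
      refine Finset.sum_congr rfl fun p _ => ?_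
      rw [star_sum]
      refine Finset.sum_congr rfl fun q _ => ?_
      rw [star_mul', hX.apply]
    calc ∑ p, ∑ q, X p q * Wh p q
        = -(2⁻¹ : ℂ) * ((∑ p, ∑ q, X p q * W p q) + star (∑ p, ∑ q, X p q * W p q)) := by
          rw [← h1, ← Finset.sum_add_distrib, Finset.mul_sum]
          refine Finset.sum_congr rfl fun p _ => ?_
          rw [← Finset.sum_add_distrib, Finset.mul_sum]
          refine Finset.sum_congr rfl fun q _ => ?_
          simp only [hWh, Matrix.of_apply]
          ring
      _ = -(f X : ℂ) := by
          rw [Complex.star_def, Complex.add_conj, hrepr X]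
          push_cast
          ring
  -- the separating functional as an element of the dual cone
  set φ₀ := mkMap Wh with hφ₀
  have hchoiφ₀ : choi φ₀ = Wh := choi_mkMap Wh
  have hφ₀herm : IsHermP φ₀ := (isHermP_iff_choi φ₀).2 (hchoiφ₀ ▸ hWh_herm)
  have hφ₀dual : φ₀ ∈ dualCone K := by
    refine ⟨hφ₀herm, fun σ' hσ' => ?_⟩
    rw [mapPair_eq, hchoiφ₀, hkey (choi σ') ((isHermP_iff_choi σ').1 (hH hσ'))]
    rw [show -(((f (choi σ')) : ℝ) : ℂ) = ((-(f (choi σ')) : ℝ) : ℂ) by push_cast; ring]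
    rw [Complex.zero_le_real]
    have := hfneg (choi σ') ⟨σ', hσ', rfl⟩
    linarith
  have hcontr := h φ₀ hφ₀dual
  rw [mapPair_eq, hchoiφ₀, hkey (choi χ) ((isHermP_iff_choi χ).1 hχ)] at hcontr
  rw [show -(((f (choi χ)) : ℝ) : ℂ) = ((-(f (choi χ)) : ℝ) : ℂ) by push_cast; ring] at hcontr
  rw [Complex.zero_le_real] at hcontr
  linarith

end Bipolar
/-- `K∘CP_A ⊆ K` is equivalent to each of three ampliation
characterizations of the dual cone `K°`. -/
theorem stmt16 {a b : ℕ} (K : Set (MMap a b))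
    (hH : K ⊆ HermSet a b) (hK : IsClosedConeSet K) :
    (compSet K (CPset a a) ⊆ K ↔
      ∀ φ : MMap a b, IsHermP φ →
        (φ ∈ dualCone K ↔ ∀ ψ ∈ CPset a a, idTensor φ (choi ψ) ∈ choi '' dualCone K)) ∧
    (compSet K (CPset a a) ⊆ K ↔
      ∀ φ : MMap a b, IsHermP φ →
        (φ ∈ dualCone K ↔ ∀ σ ∈ K, (idTensor (adjMap σ) (choi φ)).PosSemidef)) ∧
    (compSet K (CPset a a) ⊆ K ↔
      ∀ φ : MMap a b, IsHermP φ →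
        (φ ∈ dualCone K ↔ ∀ σ ∈ K, (idTensor (adjMap φ) (choi σ)).PosSemidef)) := by
  have hbridge1 : ∀ (φ : MMap a b) (ψ : MMap a a),
      idTensor φ (choi ψ) ∈ choi '' dualCone K ↔ φ ∘ₗ ψ ∈ dualCone K := by
    intro φ ψ
    rw [← choi_comp]
    constructor
    · rintro ⟨τ, hτ, heq⟩
      rwa [← choi_injective heq]
    · intro hmem
      exact ⟨_, hmem, rfl⟩
  refine ⟨⟨?_, ?_⟩, ⟨?_, ?_⟩, ⟨?_, ?_⟩⟩
  · -- P0 → RHS1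
    intro hP0 φ hφ
    constructor
    · intro hφK ψ hψ
      rw [hbridge1]
      refine ⟨herm_comp hφ (cp_herm hψ), fun σ hσ => ?_⟩
      have h1 := mapPair_comp' σ (adjMap ψ) φ
      rw [adj_adj] at h1
      rw [← h1]
      exact hφK.2 _ (hP0 ⟨σ, hσ, adjMap ψ, cp_adj hψ, rfl⟩)
    · intro hQ
      have := (hbridge1 φ LinearMap.id).1 (hQ LinearMap.id cp_id)
      rwa [LinearMap.comp_id] at this
  · -- RHS1 → P0
    intro hQ χ hχ
    obtain ⟨σ, hσ, ψ, hψ, rfl⟩ := hχ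
    refine bipolar hH hK ⟨σ, hσ⟩ (herm_comp (hH hσ) (cp_herm hψ)) fun φ hφ => ?_
    rw [mapPair_comp']
    have hmem := (hbridge1 φ (adjMap ψ)).1 (((hQ φ hφ.1).1 hφ) (adjMap ψ) (cp_adj hψ))
    exact hmem.2 σ hσ
  · -- P0 → RHS2
    intro hP0 φ hφ
    constructor
    · intro hφK σ hσ
      show IsCP (adjMap σ ∘ₗ φ)
      refine cp_of_pairs (herm_comp (herm_adj (hH hσ)) hφ) fun ψ hψ => ?_
      have := hφK.2 (σ ∘ₗ ψ) (hP0 ⟨σ, hσ, ψ, hψ, rfl⟩)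
      rwa [mapPair_comp] at this
    · intro hQ
      refine ⟨hφ, fun σ hσ => ?_⟩
      have h1 : mapPair σ φ = mapPair (σ ∘ₗ (LinearMap.id : MMap a a)) φ := by
        rw [LinearMap.comp_id]
      rw [h1, mapPair_comp]
      exact cp_pair_nonneg cp_id (hQ σ hσ)
  · -- RHS2 → P0
    intro hQ χ hχ
    obtain ⟨σ, hσ, ψ, hψ, rfl⟩ := hχ
    refine bipolar hH hK ⟨σ, hσ⟩ (herm_comp (hH hσ) (cp_herm hψ)) fun φ hφ => ?_
    rw [mapPair_comp]
    exact cp_pair_nonneg hψ (((hQ φ hφ.1).1 hφ) σ hσ)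
  · -- P0 → RHS3
    intro hP0 φ hφ
    constructor
    · intro hφK σ hσ
      show IsCP (adjMap φ ∘ₗ σ)
      refine cp_of_pairs (herm_comp (herm_adj hφ) (hH hσ)) fun ψ hψ => ?_
      rw [← mapPair_comp φ ψ σ, mapPair_comp', mapPair_comm]
      exact hφK.2 _ (hP0 ⟨σ, hσ, adjMap ψ, cp_adj hψ, rfl⟩)
    · intro hQ
      refine ⟨hφ, fun σ hσ => ?_⟩
      rw [mapPair_comm]
      have h1 : mapPair φ σ = mapPair (φ ∘ₗ (LinearMap.id : MMap a a)) σ := by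
        rw [LinearMap.comp_id]
      rw [h1, mapPair_comp]
      exact cp_pair_nonneg cp_id (hQ σ hσ)
  · -- RHS3 → P0
    intro hQ χ hχ
    obtain ⟨σ, hσ, ψ, hψ, rfl⟩ := hχ
    refine bipolar hH hK ⟨σ, hσ⟩ (herm_comp (hH hσ) (cp_herm hψ)) fun φ hφ => ?_
    rw [mapPair_comp, ← mapPair_adj, adj_comp, adj_adj]
    exact cp_pair_nonneg (cp_adj hψ) (((hQ φ hφ.1).1 hφ) σ hσ)
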